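/- arXiv:1507.00979 — 2 statements merged into one kernel-verified Lean document; each statement's English description precedes it below -/
import Mathlib

section
/- For every q > 0, sup_{x∈ℝ} |Φ(qx) − Φ(x)| ≤ (1/√(2πe))·(max{q, 1/q} − 1); moreover, for q ≠ 1 the supremum equals |Φ(q t_q) − Φ(t_q)| where t_q = √(ln q² / (q² − 1)), and it is bounded by √((q−1) ln q / (π(q+1))) · exp{−min(1,q)·ln q/(q²−1)}. -/
/-!
Write `Φ(qx) - Φ(x) = (2π)^{-1/2} G_q(x)` with `G_q(x) = ∫_x^{qx} e^{-u²/2} du`. Since `G_q` is odd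
and `G_q(x) = -G_{1/q}(qx)`, while `t_{1/q} = q t_q`, it suffices to look at `q > 1` and `x ≥ 0`.
There `G_q' = q e^{-q²x²/2} - e^{-x²/2}` is positive before `t_q` and negative after it, so `|G_q|`
is maximal at `t_q`. Bounding the integrand by its value at the left end point gives
`G_q(x) ≤ (q - 1) x e^{-x²/2} ≤ (q - 1) e^{-1/2}`; at `x = t_q` the middle term is the last bound
for `q > 1`.

For `q < 1` the integral over `[a, b] = [q t_q, t_q]` is bounded by `(b - a) e^{-ab/2}`, which holds
whenever `0 < a ≤ b` and `ab ≤ 1` (here `ab ≤ 1` is `sinh (log q) ≤ log q`): the substitution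
`u ↦ ab/u` folds `[a, √(ab)]` onto `[√(ab), b]`, and on the latter the folded integrand is at most
`(1 + ab/v²) e^{-ab/2}`, whose integral is exactly `(b - a) e^{-ab/2}`.
-/

open MeasureTheory ProbabilityTheory Real

/-- The standard normal distribution function Φ. -/
noncomputable def stdNormalCDF (x : ℝ) : ℝ :=
  (Real.sqrt (2 * Real.pi))⁻¹ * ∫ z in Set.Iic x, Real.exp (-z ^ 2 / 2)

open Set intervalIntegral

noncomputable def expNegSqHalf (x : ℝ) : ℝ := exp (-x ^ 2 / 2)

lemma expNegSqHalf_pos (x : ℝ) : 0 < expNegSqHalf x := exp_pos _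

lemma continuous_expNegSqHalf : Continuous expNegSqHalf := by
  unfold expNegSqHalf; fun_prop

lemma integrable_expNegSqHalf : Integrable expNegSqHalf := by
  have h : expNegSqHalf = fun x => exp (-2⁻¹ * x ^ 2) := by
    funext x; rw [expNegSqHalf]; ring_nf
  exact h ▸ integrable_exp_neg_mul_sq (b := 2⁻¹) (by norm_num)

lemma expNegSqHalf_neg (x : ℝ) : expNegSqHalf (-x) = expNegSqHalf x := by
  simp [expNegSqHalf]

lemma expNegSqHalf_antitoneOn : AntitoneOn expNegSqHalf (Ici 0) := by
  intro x hx y _ hxy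
  exact exp_le_exp.2 (by nlinarith [mem_Ici.1 hx])

lemma mul_expNegSqHalf_le (x : ℝ) : x * expNegSqHalf x ≤ exp (-1 / 2) := by
  rcases le_or_gt x 0 with hx | hx
  · exact (mul_nonpos_of_nonpos_of_nonneg hx (expNegSqHalf_pos x).le).trans (exp_pos _).le
  · have hlog : 2 * log x ≤ x ^ 2 - 1 := by
      simpa [Real.log_pow] using log_le_sub_one_of_pos (pow_pos hx 2)
    calc x * expNegSqHalf x = exp (log x - x ^ 2 / 2) := by
          rw [expNegSqHalf, sub_eq_add_neg, exp_add, exp_log hx, neg_div]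
      _ ≤ exp (-1 / 2) := exp_le_exp.2 (by linarith)

lemma mul_expNegSqHalf_mul {q : ℝ} (hq : 0 < q) (x : ℝ) :
    q * expNegSqHalf (q * x) = exp (log q - (q ^ 2 - 1) * x ^ 2 / 2) * expNegSqHalf x := by
  calc q * expNegSqHalf (q * x) = exp (log q - (q * x) ^ 2 / 2) := by
        rw [expNegSqHalf, sub_eq_add_neg, exp_add, exp_log hq, neg_div]
    _ = _ := by rw [expNegSqHalf, ← exp_add]; ring_nf

lemma stdNormalCDF_sub_stdNormalCDF (a b : ℝ) :
    stdNormalCDF b - stdNormalCDF a = (√(2 * π))⁻¹ * ∫ x in a..b, expNegSqHalf x := by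
  rw [stdNormalCDF, stdNormalCDF, ← mul_sub]
  exact congrArg _ <|
    integral_Iic_sub_Iic integrable_expNegSqHalf.integrableOn integrable_expNegSqHalf.integrableOn

lemma integral_expNegSqHalf_le_of_nonneg {a b : ℝ} (ha : 0 ≤ a) (hab : a ≤ b) :
    ∫ u in a..b, expNegSqHalf u ≤ (b - a) * expNegSqHalf a := by
  simpa using integral_mono_on (μ := volume) hab (continuous_expNegSqHalf.intervalIntegrable a b)
    intervalIntegrable_const fun u hu => expNegSqHalf_antitoneOn ha (ha.trans hu.1) hu.1

lemma sub_inv_le_two_mul_log {x : ℝ} (hx : 0 < x) (hx1 : x ≤ 1) : x - x⁻¹ ≤ 2 * log x := by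
  have := sinh_le_self_iff.2 (log_nonpos hx.le hx1)
  rw [sinh_log hx] at this
  linarith

lemma exp_neg_add_mul_exp_mul_le {α s : ℝ} (hα : 0 ≤ α) (hs : 0 ≤ s) (h : 2 * s * α ≤ 1 - s) :
    exp (-α) + s * exp (s * α) ≤ 1 + s := by
  have hsα : s * α < 1 := by nlinarith
  have hA : exp (-α) ≤ (1 + α)⁻¹ := by
    rw [exp_neg]; exact inv_anti₀ (by linarith) (by linarith [add_one_le_exp α])
  have hB : exp (s * α) ≤ (1 - s * α)⁻¹ := by
    rw [← inv_inv (exp _), ← exp_neg]; exact inv_anti₀ (by linarith) (one_sub_le_exp_neg _)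
  have hsum : 1 + s - ((1 + α)⁻¹ + s * (1 - s * α)⁻¹)
      = (1 + s) * α * (1 - s - s * α) / ((1 + α) * (1 - s * α)) := by
    field_simp [show 1 - s * α ≠ 0 by linarith]
    ring
  calc exp (-α) + s * exp (s * α) ≤ (1 + α)⁻¹ + s * (1 - s * α)⁻¹ := by gcongr
    _ ≤ 1 + s := sub_nonneg.1 <| hsum ▸ div_nonneg
        (mul_nonneg (by positivity) (by nlinarith)) (mul_nonneg (by linarith) (by linarith))

lemma expNegSqHalf_add_mul_expNegSqHalf_div_le {c y : ℝ} (hc : 0 < c) (hc1 : c ≤ 1)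
    (hcy : c ≤ y ^ 2) :
    expNegSqHalf y + c / y ^ 2 * expNegSqHalf (c / y) ≤ (1 + c / y ^ 2) * exp (-c / 2) := by
  have hy : y ≠ 0 := by rintro rfl; simp at hcy; linarith
  have hs1 : c / y ^ 2 ≤ 1 := (div_le_one₀ (by positivity)).2 hcy
  have e₁ : expNegSqHalf y = exp (-c / 2) * exp (-((y ^ 2 - c) / 2)) := by
    rw [expNegSqHalf, ← exp_add]; ring_nf
  have e₂ : expNegSqHalf (c / y) = exp (-c / 2) * exp (c / y ^ 2 * ((y ^ 2 - c) / 2)) := by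
    rw [expNegSqHalf, ← exp_add]; field_simp; ring_nf
  have hcond : 2 * (c / y ^ 2) * ((y ^ 2 - c) / 2) ≤ 1 - c / y ^ 2 := by
    have : 2 * (c / y ^ 2) * ((y ^ 2 - c) / 2) = c * (1 - c / y ^ 2) := by field_simp
    rw [this]
    exact mul_le_of_le_one_left (sub_nonneg.2 hs1) hc1
  have key := exp_neg_add_mul_exp_mul_le (by linarith) (by positivity) hcond
  rw [e₁, e₂]
  nlinarith [exp_pos (-c / 2)]

lemma integral_div_sq_mul_comp_div {f : ℝ → ℝ} (hf : Continuous f) (c : ℝ) {x y : ℝ}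
    (hx : 0 < x) (hy : 0 < y) :
    ∫ v in x..y, c / v ^ 2 * f (c / v) = ∫ u in c / y..c / x, f u := by
  have hne : ∀ v ∈ uIcc x y, v ≠ 0 := fun v hv =>
    ((lt_min hx hy).trans_le hv.1).ne'
  have hderiv : ∀ v ∈ uIcc x y, HasDerivAt (fun v => c / v) (-(c / v ^ 2)) v := fun v hv => by
    simpa [div_eq_mul_inv] using (hasDerivAt_inv (hne v hv)).const_mul c
  have hcont : ContinuousOn (fun v => -(c / v ^ 2)) (uIcc x y) :=
    (continuousOn_const.div (continuousOn_pow 2) fun v hv => pow_ne_zero 2 (hne v hv)).neg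
  rw [integral_symm (c / x), ← integral_comp_mul_deriv hderiv hcont hf,
    ← intervalIntegral.integral_neg]
  simp only [Function.comp, mul_neg, neg_neg, mul_comm]

lemma integral_one_add_div_sq (c : ℝ) {x y : ℝ} (hx : 0 < x) (hy : 0 < y) :
    ∫ v in x..y, (1 + c / v ^ 2) = (y - c / y) - (x - c / x) := by
  have hne : ∀ v ∈ uIcc x y, v ≠ 0 := fun v hv => ((lt_min hx hy).trans_le hv.1).ne'
  have hint : IntervalIntegrable (fun v => 1 + c / v ^ 2) volume x y :=
    (continuousOn_const.add (continuousOn_const.div (continuousOn_pow 2)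
      fun v hv => pow_ne_zero 2 (hne v hv))).intervalIntegrable
  refine integral_eq_sub_of_hasDerivAt (f := fun v => v - c / v) (fun v hv => ?_) hint
  convert (hasDerivAt_id' v).sub ((hasDerivAt_inv (hne v hv)).const_mul c) using 1
  · funext w; simp [div_eq_mul_inv]
  · ring

lemma integral_expNegSqHalf_le_of_mul_le_one {a b : ℝ} (ha : 0 < a) (hab : a ≤ b)
    (h1 : a * b ≤ 1) :
    ∫ u in a..b, expNegSqHalf u ≤ (b - a) * exp (-(a * b) / 2) := by
  set c := a * b
  set m := √c
  have hb : 0 < b := ha.trans_le hab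
  have hc : 0 < c := mul_pos ha hb
  have hm : 0 < m := sqrt_pos.2 hc
  have hm2 : m ^ 2 = c := sq_sqrt hc.le
  have ham : a ≤ m := le_sqrt_of_sq_le (by nlinarith)
  have hmb : m ≤ b := sqrt_le_iff.2 ⟨by linarith, by nlinarith⟩
  have hcm : c / m = m := by rw [div_eq_iff hm.ne', ← sq, hm2]
  have hcb : c / b = a := by rw [div_eq_iff (by linarith)]
  have hne : ∀ v ∈ uIcc m b, v ≠ 0 := fun v hv =>
    (hm.trans_le (uIcc_of_le hmb ▸ hv).1).ne'
  have hsq : ContinuousOn (fun v => c / v ^ 2) (uIcc m b) :=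
    continuousOn_const.div (continuousOn_pow 2) fun v hv => pow_ne_zero 2 (hne v hv)
  have hint : IntervalIntegrable (fun v => c / v ^ 2 * expNegSqHalf (c / v)) volume m b :=
    (hsq.mul (continuous_expNegSqHalf.comp_continuousOn
      (continuousOn_const.div continuousOn_id hne))).intervalIntegrable
  have hφ : ∀ u v, IntervalIntegrable expNegSqHalf volume u v :=
    continuous_expNegSqHalf.intervalIntegrable
  calc ∫ u in a..b, expNegSqHalf u
      = (∫ u in a..m, expNegSqHalf u) + ∫ v in m..b, expNegSqHalf v :=
        (integral_add_adjacent_intervals (hφ a m) (hφ m b)).symm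
    _ = ∫ v in m..b, (expNegSqHalf v + c / v ^ 2 * expNegSqHalf (c / v)) := by
        rw [integral_add (hφ m b) hint,
          integral_div_sq_mul_comp_div continuous_expNegSqHalf c hm hb,
          hcm, hcb, add_comm]
    _ ≤ ∫ v in m..b, (1 + c / v ^ 2) * exp (-c / 2) :=
        integral_mono_on hmb ((hφ m b).add hint)
          ((continuousOn_const.add hsq).mul continuousOn_const).intervalIntegrable
          fun v hv => expNegSqHalf_add_mul_expNegSqHalf_div_le hc h1
            (hm2 ▸ pow_le_pow_left₀ hm.le hv.1 2)
    _ = (b - a) * exp (-c / 2) := by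
        rw [intervalIntegral.integral_mul_const, integral_one_add_div_sq c hm hb, hcm, hcb]
        ring

noncomputable def scaleGap (q x : ℝ) : ℝ := ∫ u in x..q * x, expNegSqHalf u

lemma hasDerivAt_scaleGap (q x : ℝ) :
    HasDerivAt (scaleGap q) (q * expNegSqHalf (q * x) - expNegSqHalf x) x := by
  have hF := fun y => (continuous_expNegSqHalf.integral_hasStrictDerivAt 0 y).hasDerivAt
  have h := ((hF (q * x)).comp x ((hasDerivAt_id x).const_mul q)).sub (hF x)
  refine (h.congr_of_eventuallyEq (Filter.Eventually.of_forall fun y => ?_)).congr_deriv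
    (by simp [mul_comm])
  exact (integral_interval_sub_left (continuous_expNegSqHalf.intervalIntegrable _ _)
    (continuous_expNegSqHalf.intervalIntegrable _ _)).symm

lemma scaleGap_neg (q x : ℝ) : scaleGap q (-x) = -scaleGap q x := by
  rw [scaleGap, scaleGap, mul_neg, ← integral_symm, ← integral_comp_neg]
  simp only [expNegSqHalf_neg]

lemma scaleGap_inv_mul {q : ℝ} (hq : q ≠ 0) (x : ℝ) : scaleGap q⁻¹ (q * x) = -scaleGap q x := by
  rw [scaleGap, scaleGap, inv_mul_cancel_left₀ hq, integral_symm]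

lemma scaleGap_nonneg {q x : ℝ} (hq : 1 ≤ q) (hx : 0 ≤ x) : 0 ≤ scaleGap q x :=
  integral_nonneg (le_mul_of_one_le_left hx hq) fun u _ => (expNegSqHalf_pos u).le

lemma abs_scaleGap_le_of_one_le {q : ℝ} (hq : 1 ≤ q) (x : ℝ) :
    |scaleGap q x| ≤ (q - 1) * exp (-1 / 2) := by
  wlog hx : 0 ≤ x generalizing x
  · simpa [scaleGap_neg] using this (-x) (by linarith)
  rw [abs_of_nonneg (scaleGap_nonneg hq hx)]
  calc scaleGap q x ≤ (q * x - x) * expNegSqHalf x :=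
        integral_expNegSqHalf_le_of_nonneg hx (le_mul_of_one_le_left hx hq)
    _ = (q - 1) * (x * expNegSqHalf x) := by ring
    _ ≤ (q - 1) * exp (-1 / 2) := mul_le_mul_of_nonneg_left (mul_expNegSqHalf_le x) (by linarith)

lemma abs_scaleGap_le {q : ℝ} (hq : 0 < q) (x : ℝ) :
    |scaleGap q x| ≤ (max q q⁻¹ - 1) * exp (-1 / 2) := by
  rcases le_total 1 q with hq1 | hq1
  · rw [max_eq_left (inv_le_one_of_one_le₀ hq1 |>.trans hq1)]
    exact abs_scaleGap_le_of_one_le hq1 x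
  · have hq1' : 1 ≤ q⁻¹ := one_le_inv₀ hq |>.2 hq1
    rw [max_eq_right (hq1.trans hq1'), ← abs_neg, ← scaleGap_inv_mul hq.ne']
    exact abs_scaleGap_le_of_one_le hq1' _

noncomputable def scaleCriticalPoint (q : ℝ) : ℝ := √(log (q ^ 2) / (q ^ 2 - 1))

lemma sq_sub_one_ne_zero {q : ℝ} (hq : 0 < q) (hq1 : q ≠ 1) : q ^ 2 - 1 ≠ 0 :=
  sub_ne_zero.2 ((pow_eq_one_iff_of_nonneg hq.le two_ne_zero).not.2 hq1)

lemma scaleCriticalPoint_pos {q : ℝ} (hq : 0 < q) (hq1 : q ≠ 1) : 0 < scaleCriticalPoint q := by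
  refine sqrt_pos.2 (div_pos_iff.2 ?_)
  rcases lt_or_gt_of_ne hq1 with hlt | hgt
  · exact .inr ⟨log_neg (by positivity) (by nlinarith), by nlinarith⟩
  · exact .inl ⟨log_pos (by nlinarith), by nlinarith⟩

lemma scaleCriticalPoint_sq {q : ℝ} (hq : 0 < q) (hq1 : q ≠ 1) :
    scaleCriticalPoint q ^ 2 = 2 * log q / (q ^ 2 - 1) := by
  rw [scaleCriticalPoint, sq_sqrt (sqrt_pos.1 (scaleCriticalPoint_pos hq hq1)).le, log_pow]
  norm_num

lemma scaleCriticalPoint_inv {q : ℝ} (hq : 0 < q) :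
    scaleCriticalPoint q⁻¹ = q * scaleCriticalPoint q := by
  rw [scaleCriticalPoint, scaleCriticalPoint, ← sqrt_sq hq.le, ← sqrt_mul (sq_nonneg q),
    sqrt_sq hq.le]
  congr 1
  have : (q ^ 2)⁻¹ - 1 = -(q ^ 2 - 1) / q ^ 2 := by field_simp; ring
  rw [inv_pow, log_inv, this, div_div_eq_mul_div, neg_mul, neg_div_neg_eq, mul_comm, mul_div_assoc]

lemma hasDerivAt_scaleGap_of_ne_one {q : ℝ} (hq : 0 < q) (hq1 : q ≠ 1) (x : ℝ) :
    HasDerivAt (scaleGap q)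
      ((exp ((q ^ 2 - 1) * (scaleCriticalPoint q ^ 2 - x ^ 2) / 2) - 1) * expNegSqHalf x) x := by
  convert hasDerivAt_scaleGap q x using 1
  rw [mul_expNegSqHalf_mul hq, scaleCriticalPoint_sq hq hq1, sub_one_mul]
  congr 3
  field_simp [sq_sub_one_ne_zero hq hq1]

lemma scaleGap_le_scaleGap_scaleCriticalPoint {q x : ℝ} (hq : 1 < q) (hx : 0 ≤ x) :
    scaleGap q x ≤ scaleGap q (scaleCriticalPoint q) := by
  have hq0 : 0 < q := one_pos.trans hq
  have hderiv := hasDerivAt_scaleGap_of_ne_one hq0 hq.ne'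
  set t := scaleCriticalPoint q
  have ht : 0 < t := scaleCriticalPoint_pos hq0 hq.ne'
  have hq2 : 0 < q ^ 2 - 1 := by nlinarith
  have hcont : ContinuousOn (scaleGap q) univ :=
    (continuous_iff_continuousAt.2 fun y => (hderiv y).continuousAt).continuousOn
  have hmono : MonotoneOn (scaleGap q) (Icc 0 t) :=
    monotoneOn_of_hasDerivWithinAt_nonneg (convex_Icc 0 t) (hcont.mono (subset_univ _))
      (fun y _ => (hderiv y).hasDerivWithinAt) fun y hy => by
        rw [interior_Icc] at hy
        have hyt : 0 ≤ t ^ 2 - y ^ 2 := by nlinarith [hy.1, hy.2]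
        exact mul_nonneg (sub_nonneg.2 (one_le_exp (by positivity))) (expNegSqHalf_pos y).le
  have hanti : AntitoneOn (scaleGap q) (Ici t) :=
    antitoneOn_of_hasDerivWithinAt_nonpos (convex_Ici t) (hcont.mono (subset_univ _))
      (fun y _ => (hderiv y).hasDerivWithinAt) fun y hy => by
        rw [interior_Ici] at hy
        have hyt : t ^ 2 - y ^ 2 ≤ 0 := by nlinarith [mem_Ioi.1 hy]
        exact mul_nonpos_of_nonpos_of_nonneg
          (sub_nonpos.2 (exp_le_one_iff.2 (by nlinarith))) (expNegSqHalf_pos y).le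
  rcases le_total x t with hxt | htx
  · exact hmono ⟨hx, hxt⟩ ⟨ht.le, le_rfl⟩ hxt
  · exact hanti (mem_Ici.2 le_rfl) htx htx

lemma abs_scaleGap_le_abs_scaleGap_scaleCriticalPoint {q : ℝ} (hq : 0 < q) (hq1 : q ≠ 1)
    (x : ℝ) : |scaleGap q x| ≤ |scaleGap q (scaleCriticalPoint q)| := by
  wlog hgt : 1 < q generalizing q x
  · have hlt : q < 1 := lt_of_le_of_ne (not_lt.1 hgt) hq1
    have h := this (inv_pos.2 hq) (inv_ne_one.2 hq1) (q * x) (one_lt_inv₀ hq |>.2 hlt)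
    rwa [scaleCriticalPoint_inv hq, scaleGap_inv_mul hq.ne', scaleGap_inv_mul hq.ne', abs_neg,
      abs_neg] at h
  wlog hx : 0 ≤ x generalizing x
  · simpa [scaleGap_neg] using this (-x) (by linarith)
  rw [abs_of_nonneg (scaleGap_nonneg hgt.le hx),
    abs_of_nonneg (scaleGap_nonneg hgt.le (scaleCriticalPoint_pos hq hq1).le)]
  exact scaleGap_le_scaleGap_scaleCriticalPoint hgt hx

lemma abs_scaleGap_scaleCriticalPoint_le {q : ℝ} (hq : 0 < q) (hq1 : q ≠ 1) :
    |scaleGap q (scaleCriticalPoint q)|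
      ≤ |q - 1| * scaleCriticalPoint q * exp (-(min 1 q * scaleCriticalPoint q ^ 2 / 2)) := by
  set t := scaleCriticalPoint q
  have ht : 0 < t := scaleCriticalPoint_pos hq hq1
  rcases lt_or_gt_of_ne hq1 with hlt | hgt
  · have hqt : q * t ≤ t := mul_le_of_le_one_left ht.le hlt.le
    have hmul : q * t * t ≤ 1 := by
      have hlog := sub_inv_le_two_mul_log hq hlt.le
      have hq2 : q * (q - q⁻¹) = q ^ 2 - 1 := by field_simp
      rw [mul_assoc, ← sq, scaleCriticalPoint_sq hq hq1, mul_div_assoc',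
        div_le_one_of_neg (by nlinarith)]
      nlinarith
    rw [min_eq_right hlt.le, abs_of_neg (sub_neg.2 hlt), scaleGap, integral_symm, abs_neg,
      abs_of_nonneg (integral_nonneg hqt fun u _ => (expNegSqHalf_pos u).le)]
    calc ∫ u in q * t..t, expNegSqHalf u ≤ (t - q * t) * exp (-(q * t * t) / 2) :=
          integral_expNegSqHalf_le_of_mul_le_one (by positivity) hqt hmul
      _ = _ := by ring_nf
  · rw [min_eq_left hgt.le, abs_of_pos (sub_pos.2 hgt),
      abs_of_nonneg (scaleGap_nonneg hgt.le ht.le)]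
    calc scaleGap q t ≤ (q * t - t) * expNegSqHalf t :=
          integral_expNegSqHalf_le_of_nonneg ht.le (le_mul_of_one_le_left ht.le hgt.le)
      _ = _ := by rw [expNegSqHalf]; ring_nf

lemma abs_stdNormalCDF_mul_sub (q x : ℝ) :
    |stdNormalCDF (q * x) - stdNormalCDF x| = (√(2 * π))⁻¹ * |scaleGap q x| := by
  rw [stdNormalCDF_sub_stdNormalCDF, abs_mul, abs_of_nonneg (by positivity)]
  rfl

lemma abs_stdNormalCDF_mul_scaleCriticalPoint_sub_le {q : ℝ} (hq : 0 < q) (hq1 : q ≠ 1) :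
    |stdNormalCDF (q * scaleCriticalPoint q) - stdNormalCDF (scaleCriticalPoint q)|
      ≤ √((q - 1) * log q / (π * (q + 1))) * exp (-(min 1 q * log q / (q ^ 2 - 1))) := by
  have ht := scaleCriticalPoint_pos hq hq1
  have hsqrt : √((q - 1) * log q / (π * (q + 1)))
      = (√(2 * π))⁻¹ * (|q - 1| * scaleCriticalPoint q) := by
    rw [← sqrt_inv, ← sqrt_sq_eq_abs, ← sqrt_sq ht.le, ← sqrt_mul (sq_nonneg _),
      ← sqrt_mul (inv_nonneg.2 (by positivity)), scaleCriticalPoint_sq hq hq1]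
    congr 1
    field_simp [sq_sub_one_ne_zero hq hq1]
    ring
  have hexp : min 1 q * log q / (q ^ 2 - 1) = min 1 q * scaleCriticalPoint q ^ 2 / 2 := by
    rw [scaleCriticalPoint_sq hq hq1]; ring
  rw [abs_stdNormalCDF_mul_sub, hsqrt, hexp, mul_assoc]
  exact mul_le_mul_of_nonneg_left (abs_scaleGap_scaleCriticalPoint_le hq hq1) (by positivity)

/-- for every `q > 0`,
`sup_x |Φ(qx) − Φ(x)| ≤ (2πe)^{-1/2} (max{q, 1/q} − 1)`; moreover, for `q ≠ 1` the supremum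
is attained at `t_q = √(ln q² / (q² − 1))`, i.e. it equals `|Φ(q t_q) − Φ(t_q)|`, and it is
bounded by `√((q−1) ln q / (π(q+1))) · exp{−min(1,q) ln q/(q²−1)}`. -/
theorem sup_abs_stdNormalCDF_scale (q : ℝ) (hq : 0 < q) :
    (⨆ x : ℝ, |stdNormalCDF (q * x) - stdNormalCDF x|)
        ≤ (Real.sqrt (2 * Real.pi * Real.exp 1))⁻¹ * (max q q⁻¹ - 1) ∧
    (q ≠ 1 →
      (⨆ x : ℝ, |stdNormalCDF (q * x) - stdNormalCDF x|)
          = |stdNormalCDF (q * Real.sqrt (Real.log (q ^ 2) / (q ^ 2 - 1)))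
              - stdNormalCDF (Real.sqrt (Real.log (q ^ 2) / (q ^ 2 - 1)))| ∧
      (⨆ x : ℝ, |stdNormalCDF (q * x) - stdNormalCDF x|)
          ≤ Real.sqrt ((q - 1) * Real.log q / (Real.pi * (q + 1)))
              * Real.exp (-(min 1 q * Real.log q / (q ^ 2 - 1)))) := by
  have hconst : (√(2 * π * exp 1))⁻¹ = (√(2 * π))⁻¹ * exp (-1 / 2) := by
    rw [sqrt_mul (by positivity), mul_inv, ← exp_half, ← exp_neg, neg_div]
  refine ⟨ciSup_le fun x => ?_, fun hq1 => ?_⟩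
  · rw [abs_stdNormalCDF_mul_sub, hconst, mul_assoc, mul_comm (exp _)]
    exact mul_le_mul_of_nonneg_left (abs_scaleGap_le hq x) (by positivity)
  · have hsup : (⨆ x, |stdNormalCDF (q * x) - stdNormalCDF x|)
        = |stdNormalCDF (q * scaleCriticalPoint q) - stdNormalCDF (scaleCriticalPoint q)| :=
      IsGreatest.csSup_eq ⟨⟨_, rfl⟩, by
        rintro _ ⟨x, rfl⟩
        simp only [abs_stdNormalCDF_mul_sub]
        exact mul_le_mul_of_nonneg_left
          (abs_scaleGap_le_abs_scaleGap_scaleCriticalPoint hq hq1 x) (by positivity)⟩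
    exact ⟨hsup, hsup ▸ abs_stdNormalCDF_mul_scaleCriticalPoint_sub_le hq hq1⟩
end

section
/- Let X be a real random variable with E X² < ∞ and 0 < Var X. Then sup_{x∈ℝ} |P((X − E X)/√(Var X) < x) − Φ(x)| ≤ sup_{z>0} |1/(1+z²) − Φ(−z)|, and the right-hand side equals 0.54093… (in particular it is at most 0.541). -/
/-!
Cantelli's one-sided Chebyshev inequality `P(Y ≥ t) ≤ 1 / (1 + t²)` for a standardized `Y` pins
its distribution function `F` between `1 - 1 / (1 + x²)` and `1` for `x > 0`, and between `0` and
`1 / (1 + x²)` for `x < 0`. Together with `Φ(x) + Φ(-x) = 1` this bounds `|F(x) - Φ(x)|` either by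
the gap `1 / (1 + z²) - Φ(-z)` at `z = |x|` or by `1/2`, and `1/2` is itself the limit of that gap
as `z → 0⁺`. The numerical bound `0.541` comes from `e^{-u} ≤ 1 - u + u²` integrated under the
Gaussian density near `0`, and from `1 / (1 + z²) ≤ 1/2` for `z ≥ 1`.
-/

open MeasureTheory ProbabilityTheory Real

open Set Filter Topology

lemma integrable_exp_neg_sq_div_two : Integrable fun z : ℝ => exp (-z ^ 2 / 2) := by
  simpa [neg_div, div_eq_inv_mul] using integrable_exp_neg_mul_sq (b := 1 / 2) (by norm_num)

lemma integral_exp_neg_sq_div_two : ∫ z : ℝ, exp (-z ^ 2 / 2) = √(2 * π) := by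
  simpa [neg_mul, div_eq_inv_mul] using integral_gaussian (1 / 2)

lemma stdNormalCDF_nonneg (x : ℝ) : 0 ≤ stdNormalCDF x :=
  mul_nonneg (by positivity) (setIntegral_nonneg measurableSet_Iic fun _ _ => by positivity)

lemma stdNormalCDF_mono : Monotone stdNormalCDF := fun x y hxy => by
  refine mul_le_mul_of_nonneg_left ?_ (by positivity)
  exact setIntegral_mono_set integrable_exp_neg_sq_div_two.integrableOn
    (.of_forall fun _ => by positivity) (Iic_subset_Iic.2 hxy).eventuallyLE

lemma stdNormalCDF_add_stdNormalCDF_neg (x : ℝ) : stdNormalCDF x + stdNormalCDF (-x) = 1 := by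
  have hreflect : ∫ z in Iic (-x), exp (-z ^ 2 / 2) = ∫ z in Ioi x, exp (-z ^ 2 / 2) := by
    rw [← integral_comp_neg_Ioi]
    simp only [neg_sq]
  have hsqrt : √(2 * π) ≠ 0 := by positivity
  rw [stdNormalCDF, stdNormalCDF, hreflect, ← mul_add,
    intervalIntegral.integral_Iic_add_Ioi integrable_exp_neg_sq_div_two.integrableOn
      integrable_exp_neg_sq_div_two.integrableOn,
    integral_exp_neg_sq_div_two, inv_mul_cancel₀ hsqrt]

lemma stdNormalCDF_zero : stdNormalCDF 0 = 1 / 2 := by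
  linarith [neg_zero (G := ℝ) ▸ stdNormalCDF_add_stdNormalCDF_neg 0]

lemma stdNormalCDF_le_half {x : ℝ} (hx : x ≤ 0) : stdNormalCDF x ≤ 1 / 2 :=
  stdNormalCDF_zero ▸ stdNormalCDF_mono hx

lemma exp_neg_le_one_sub_add_sq {u : ℝ} (hu : 0 ≤ u) : exp (-u) ≤ 1 - u + u ^ 2 := by
  have hquad : 0 ≤ 1 - u + u ^ 2 := by nlinarith [sq_nonneg (u - 1)]
  rw [exp_neg, inv_le_iff_one_le_mul₀ (exp_pos u)]
  nlinarith [mul_le_mul_of_nonneg_left (add_one_le_exp u) hquad, pow_nonneg hu 3]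

lemma inv_sqrt_two_pi_le : (√(2 * π))⁻¹ ≤ 0.39895 := by
  have h : (2.50658 : ℝ) ≤ √(2 * π) :=
    le_sqrt_of_sq_le (by nlinarith [pi_gt_d6])
  rw [inv_le_comm₀ (by positivity) (by norm_num)]
  exact le_trans (by norm_num) h

lemma half_sub_le_stdNormalCDF_neg {z : ℝ} (hz : 0 ≤ z) :
    1 / 2 - (√(2 * π))⁻¹ * (z - z ^ 3 / 6 + z ^ 5 / 20) ≤ stdNormalCDF (-z) := by
  have hpoly : Continuous fun t : ℝ => 1 - t ^ 2 / 2 + t ^ 4 / 4 := by fun_prop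
  have hdiff : stdNormalCDF 0 - stdNormalCDF (-z)
      = (√(2 * π))⁻¹ * ∫ t in (-z)..0, exp (-t ^ 2 / 2) := by
    rw [stdNormalCDF, stdNormalCDF, ← mul_sub, intervalIntegral.integral_Iic_sub_Iic
      integrable_exp_neg_sq_div_two.integrableOn integrable_exp_neg_sq_div_two.integrableOn]
  have hbound : ∫ t in (-z)..0, exp (-t ^ 2 / 2) ≤ ∫ t in (-z)..0, (1 - t ^ 2 / 2 + t ^ 4 / 4) := by
    refine intervalIntegral.integral_mono_on (by linarith)
      integrable_exp_neg_sq_div_two.intervalIntegrable (hpoly.intervalIntegrable _ _) fun t _ => ?_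
    have := exp_neg_le_one_sub_add_sq (u := t ^ 2 / 2) (by positivity)
    rw [neg_div]
    linarith
  have hpoly_int : ∫ t in (-z)..0, (1 - t ^ 2 / 2 + t ^ 4 / 4) = z - z ^ 3 / 6 + z ^ 5 / 20 := by
    rw [intervalIntegral.integral_add, intervalIntegral.integral_sub, intervalIntegral.integral_div,
      intervalIntegral.integral_div]
    · simp only [integral_pow, intervalIntegral.integral_const]
      ring
    all_goals exact Continuous.intervalIntegrable (by fun_prop) _ _
  rw [stdNormalCDF_zero] at hdiff
  linarith [mul_le_mul_of_nonneg_left (hpoly_int ▸ hbound) (by positivity : 0 ≤ (√(2 * π))⁻¹)]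

-- The margin is smallest, about `6·10⁻⁵`, near `z ≈ 0.2135`, where the hint squares are centred.
lemma one_div_one_add_sq_le {z : ℝ} (hz0 : 0 ≤ z) (hz1 : z ≤ 1) :
    1 / (1 + z ^ 2) ≤ 1.041 - 0.39895 * (z - z ^ 3 / 6 + z ^ 5 / 20) := by
  rw [div_le_iff₀ (by positivity)]
  nlinarith [sq_nonneg (z - 0.2135), sq_nonneg (z * (z - 0.2135)), sq_nonneg (z ^ 2 * (z - 0.2135)),
    mul_nonneg hz0 hz0, mul_nonneg (mul_nonneg hz0 hz0) hz0, sq_nonneg (1 - z),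
    mul_nonneg (sub_nonneg.2 hz1) hz0, sq_nonneg (z ^ 2 * (1 - z)),
    mul_nonneg (mul_nonneg (sub_nonneg.2 hz1) hz0) hz0]

noncomputable def cantelliGap (z : ℝ) : ℝ := |1 / (1 + z ^ 2) - stdNormalCDF (-z)|

lemma cantelliGap_le {z : ℝ} (hz : 0 < z) : cantelliGap z ≤ 0.541 := by
  have hΦ0 := stdNormalCDF_nonneg (-z)
  have hΦhalf := stdNormalCDF_le_half (neg_nonpos.2 hz.le)
  refine abs_le.2 ⟨by linarith [show 0 ≤ 1 / (1 + z ^ 2) by positivity], ?_⟩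
  rcases le_or_gt z 1 with hz1 | hz1
  · have hpoly : 0 ≤ z - z ^ 3 / 6 + z ^ 5 / 20 := by
      nlinarith [pow_le_one₀ hz.le hz1 (n := 3), pow_nonneg hz.le 5]
    linarith [half_sub_le_stdNormalCDF_neg hz.le, one_div_one_add_sq_le hz.le hz1,
      mul_le_mul_of_nonneg_right inv_sqrt_two_pi_le hpoly]
  · have : 1 / (1 + z ^ 2) ≤ 1 / 2 := by
      rw [div_le_div_iff₀ (by positivity) (by norm_num)]
      nlinarith
    linarith

lemma biSup_cantelliGap_le : ⨆ z ∈ Ioi (0 : ℝ), cantelliGap z ≤ 0.541 :=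
  Real.iSup_le (fun z => Real.iSup_le (fun hz => cantelliGap_le hz) (by norm_num)) (by norm_num)

lemma cantelliGap_le_biSup {z : ℝ} (hz : 0 < z) : cantelliGap z ≤ ⨆ w ∈ Ioi (0 : ℝ), cantelliGap w :=
  le_ciSup₂ (f := fun w (_ : w ∈ Ioi (0 : ℝ)) => cantelliGap w)
    ⟨0.541, by rintro _ ⟨_, ⟨w, rfl⟩, ⟨hw, rfl⟩⟩; exact cantelliGap_le hw⟩ z hz

lemma half_le_biSup_cantelliGap : 1 / 2 ≤ ⨆ z ∈ Ioi (0 : ℝ), cantelliGap z := by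
  have hcont : Continuous fun z : ℝ => 1 / (1 + z ^ 2) - 1 / 2 :=
    (continuous_const.div (by fun_prop) fun z => by positivity).sub continuous_const
  have hlim : Tendsto (fun z : ℝ => 1 / (1 + z ^ 2) - 1 / 2) (𝓝[>] 0) (𝓝 (1 / 2)) := by
    have := hcont.tendsto 0
    norm_num at this ⊢
    exact tendsto_nhdsWithin_of_tendsto_nhds this
  refine le_of_tendsto hlim (eventually_nhdsWithin_of_forall fun z (hz : 0 < z) => ?_)
  calc 1 / (1 + z ^ 2) - 1 / 2
      ≤ 1 / (1 + z ^ 2) - stdNormalCDF (-z) := by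
        linarith [stdNormalCDF_le_half (neg_nonpos.2 hz.le)]
    _ ≤ cantelliGap z := le_abs_self _
    _ ≤ _ := cantelliGap_le_biSup hz

lemma abs_sub_stdNormalCDF_le {p x S : ℝ} (hp : p ∈ Icc (0 : ℝ) 1)
    (hpos : 0 < x → 1 - 1 / (1 + x ^ 2) ≤ p) (hneg : x < 0 → p ≤ 1 / (1 + x ^ 2))
    (hhalf : 1 / 2 ≤ S) (hS : ∀ z, 0 < z → 1 / (1 + z ^ 2) - stdNormalCDF (-z) ≤ S) :
    |p - stdNormalCDF x| ≤ S := by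
  have hsymm := stdNormalCDF_add_stdNormalCDF_neg x
  rw [abs_le]
  rcases lt_trichotomy x 0 with hx | rfl | hx
  · have hSx := hS (-x) (neg_pos.2 hx)
    rw [neg_neg, neg_sq] at hSx
    constructor <;> linarith [hneg hx, hp.1, stdNormalCDF_le_half hx.le]
  · rw [stdNormalCDF_zero]
    constructor <;> linarith [hp.1, hp.2]
  · constructor <;> linarith [hpos hx, hp.2, hS x hx, stdNormalCDF_le_half (neg_nonpos.2 hx.le)]

section Probability

variable {Ω : Type*} [MeasurableSpace Ω] {μ : Measure Ω} [IsProbabilityMeasure μ]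

-- Markov's inequality for `(W + u)²`, with the optimal shift `u = E[W²] / t`.
lemma cantelli {W : Ω → ℝ} (hW : MemLp W 2 μ) (hmean : ∫ ω, W ω ∂μ = 0) {t : ℝ} (ht : 0 < t) :
    μ.real {ω | t ≤ W ω} ≤ (∫ ω, W ω ^ 2 ∂μ) / (∫ ω, W ω ^ 2 ∂μ + t ^ 2) := by
  set v := ∫ ω, W ω ^ 2 ∂μ
  have hv : 0 ≤ v := integral_nonneg fun ω => sq_nonneg _
  set u := v / t
  have hu : 0 ≤ u := by positivity
  have hshift : MemLp (fun ω => W ω + u) 2 μ := hW.add (memLp_const u)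
  have hsecond : ∫ ω, (W ω + u) ^ 2 ∂μ = v + u ^ 2 := by
    have hcross : Integrable (fun ω => 2 * W ω * u) μ :=
      ((hW.integrable one_le_two).const_mul 2).mul_const u
    have hquad : Integrable (fun ω => W ω ^ 2 + 2 * W ω * u) μ := hW.integrable_sq.add hcross
    simp_rw [add_sq]
    rw [integral_add hquad (integrable_const _), integral_add hW.integrable_sq hcross,
      integral_mul_const, integral_const_mul, hmean]
    simp [v]
  have hmarkov := mul_meas_ge_le_integral_of_nonneg (ae_of_all μ fun ω => sq_nonneg (W ω + u))
    hshift.integrable_sq ((t + u) ^ 2)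
  have hsub : {ω | t ≤ W ω} ⊆ {ω | (t + u) ^ 2 ≤ (W ω + u) ^ 2} := fun ω (h : t ≤ W ω) =>
    show (t + u) ^ 2 ≤ (W ω + u) ^ 2 from pow_le_pow_left₀ (by positivity) (by linarith) 2
  calc μ.real {ω | t ≤ W ω} ≤ μ.real {ω | (t + u) ^ 2 ≤ (W ω + u) ^ 2} := measureReal_mono hsub
    _ ≤ (v + u ^ 2) / (t + u) ^ 2 := by
      rw [le_div_iff₀ (by positivity), mul_comm, ← hsecond]
      exact hmarkov
    _ = v / (v + t ^ 2) := by
      simp only [u]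
      field_simp
      ring

variable {Y : Ω → ℝ}

lemma one_sub_le_measureReal_lt_of_pos (hY : MemLp Y 2 μ) (hmean : ∫ ω, Y ω ∂μ = 0)
    (hunit : ∫ ω, Y ω ^ 2 ∂μ = 1) {x : ℝ} (hx : 0 < x) :
    1 - 1 / (1 + x ^ 2) ≤ μ.real {ω | Y ω < x} := by
  have hcompl : {ω | Y ω < x} = {ω | x ≤ Y ω}ᶜ := by ext; simp
  have htail := cantelli hY hmean hx
  rw [hunit] at htail
  rw [hcompl, probReal_compl_eq_one_sub₀ (nullMeasurableSet_le aemeasurable_const hY.1.aemeasurable)]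
  linarith

lemma measureReal_lt_le_of_neg (hY : MemLp Y 2 μ) (hmean : ∫ ω, Y ω ∂μ = 0)
    (hunit : ∫ ω, Y ω ^ 2 ∂μ = 1) {x : ℝ} (hx : x < 0) :
    μ.real {ω | Y ω < x} ≤ 1 / (1 + x ^ 2) := by
  have htail := cantelli (W := -Y) hY.neg (by simp [integral_neg, hmean]) (neg_pos.2 hx)
  simp only [Pi.neg_apply, neg_sq, hunit] at htail
  calc μ.real {ω | Y ω < x} ≤ μ.real {ω | -x ≤ -Y ω} :=
        measureReal_mono fun ω (h : Y ω < x) => show -x ≤ -Y ω by linarith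
    _ ≤ _ := htail

lemma abs_measureReal_lt_sub_stdNormalCDF_le (hY : MemLp Y 2 μ) (hmean : ∫ ω, Y ω ∂μ = 0)
    (hunit : ∫ ω, Y ω ^ 2 ∂μ = 1) (x : ℝ) :
    |μ.real {ω | Y ω < x} - stdNormalCDF x| ≤ ⨆ z ∈ Ioi (0 : ℝ), cantelliGap z :=
  abs_sub_stdNormalCDF_le ⟨measureReal_nonneg, measureReal_le_one⟩
    (one_sub_le_measureReal_lt_of_pos hY hmean hunit) (measureReal_lt_le_of_neg hY hmean hunit)
    half_le_biSup_cantelliGap fun _ hz => (le_abs_self _).trans (cantelliGap_le_biSup hz)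

end Probability

theorem standardized_rv_normal_approx_bound_general
    {Ω : Type*} [MeasureSpace Ω] [IsProbabilityMeasure (ℙ : Measure Ω)]
    (X : Ω → ℝ) (hL2 : MemLp X 2 ℙ)
    (hvar : 0 < ∫ ω, (X ω - ∫ ω', X ω') ^ 2) :
    (∀ x : ℝ,
      |(ℙ {ω | (X ω - ∫ ω', X ω') / Real.sqrt (∫ ω'', (X ω'' - ∫ ω', X ω') ^ 2) < x}).toReal
          - stdNormalCDF x|
        ≤ ⨆ z ∈ Set.Ioi (0 : ℝ), |1 / (1 + z ^ 2) - stdNormalCDF (-z)|) ∧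
    (⨆ z ∈ Set.Ioi (0 : ℝ), |1 / (1 + z ^ 2) - stdNormalCDF (-z)|) ≤ 0.541 := by
  set m := ∫ ω, X ω
  set σ := √(∫ ω, (X ω - m) ^ 2)
  have hσ : σ ^ 2 = ∫ ω, (X ω - m) ^ 2 := sq_sqrt hvar.le
  have hY : MemLp (fun ω => (X ω - m) / σ) 2 ℙ := by
    simpa only [div_eq_mul_inv, Pi.sub_apply] using (hL2.sub (memLp_const m)).mul_const σ⁻¹
  have hmean : ∫ ω, (X ω - m) / σ = 0 := by
    rw [integral_div, integral_sub (hL2.integrable one_le_two) (integrable_const m)]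
    simp [m]
  have hunit : ∫ ω, ((X ω - m) / σ) ^ 2 = 1 := by
    simp_rw [div_pow]
    rw [integral_div, hσ, div_self hvar.ne']
  exact ⟨abs_measureReal_lt_sub_stdNormalCDF_le hY hmean hunit, biSup_cantelliGap_le⟩

/-- for any square-integrable random variable `X` with positive variance,
`sup_x |P((X − E X)/√(Var X) < x) − Φ(x)| ≤ sup_{z>0} |1/(1+z²) − Φ(−z)|`, and the latter
supremum is at most `0.541`. -/
theorem standardized_rv_normal_approx_bound
    {Ω : Type*} [MeasureSpace Ω] [IsProbabilityMeasure (ℙ : Measure Ω)]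
    (X : Ω → ℝ) (hmeas : Measurable X) (hL2 : MemLp X 2 ℙ)
    (hvar : 0 < ∫ ω, (X ω - ∫ ω', X ω') ^ 2) :
    (∀ x : ℝ,
      |(ℙ {ω | (X ω - ∫ ω', X ω') / Real.sqrt (∫ ω'', (X ω'' - ∫ ω', X ω') ^ 2) < x}).toReal
          - stdNormalCDF x|
        ≤ ⨆ z ∈ Set.Ioi (0 : ℝ), |1 / (1 + z ^ 2) - stdNormalCDF (-z)|) ∧
    (⨆ z ∈ Set.Ioi (0 : ℝ), |1 / (1 + z ^ 2) - stdNormalCDF (-z)|) ≤ 0.541 :=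
  standardized_rv_normal_approx_bound_general X hL2 hvar
end
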